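/- Let (G,v₀,W) be a Banach–Mazur game on a finite graph where W is a countable intersection of open subsets of Paths(G,v₀), and let P be a reasonable probability measure on Paths(G,v₀). Then the following are equivalent: (1) P(W) = 1; (2) Player 0 has a winning α-strategy for some α > 0; (3) Player 0 has a winning α-strategy for every α with 0 < α < 1. -/

import Mathlib

open MeasureTheory
open scoped ENNReal NNReal

namespace BMGame

variable {V : Type*}

/-- The prefix of length `n` of the infinite sequence `ρ`. -/
def pref (ρ : ℕ → V) (n : ℕ) : List V := (List.range n).map ρ

/-- `ρ` is an infinite path of the graph `E` starting at `v₀`. -/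
def IsPlay (E : V → V → Prop) (v₀ : V) (ρ : ℕ → V) : Prop :=
  ρ 0 = v₀ ∧ ∀ n, E (ρ n) (ρ (n + 1))

/-- `π` is a nonempty finite path of the graph `E` starting at `v₀` (a position of the game). -/
def IsPos (E : V → V → Prop) (v₀ : V) (π : List V) : Prop :=
  π.head? = some v₀ ∧ π.Chain' E

/-- A strategy for player 0 assigns to each position the (nonempty) block of vertices
appended by player 0's move; `(π ++ f π).Chain' E` says that this block is a path
starting at the last vertex of `π`. -/
def IsStrategy (E : V → V → Prop) (v₀ : V) (f : List V → List V) : Prop :=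
  ∀ π, IsPos E v₀ π → f π ≠ [] ∧ (π ++ f π).Chain' E

/-- The play `ρ` is consistent with the strategy `f`: there are cut points
`c 0, c 1, …` (the lengths of the prefixes built after each move of player 1) such that
after each such prefix player 0 plays according to `f`, and player 1 then appends a
nonempty block. -/
def ConsGen (f : List V → List V) (ρ : ℕ → V) : Prop :=
  ∃ c : ℕ → ℕ, 1 ≤ c 0 ∧ ∀ i,
    pref ρ (c i + (f (pref ρ (c i))).length) = pref ρ (c i) ++ f (pref ρ (c i)) ∧
    c i + (f (pref ρ (c i))).length < c (i + 1)

/-- `f` is a winning strategy for player 0 in the Banach–Mazur game `(E, v₀, W)`. -/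
def WinningStrategy (E : V → V → Prop) (v₀ : V) (W : Set (ℕ → V))
    (f : List V → List V) : Prop :=
  IsStrategy E v₀ f ∧ ∀ ρ, IsPlay E v₀ ρ → ConsGen f ρ → ρ ∈ W

/-- The strategy `f` is `b`-bounded: each of its moves has length at most `b`. -/
def BoundedBy (E : V → V → Prop) (v₀ : V) (b : ℕ) (f : List V → List V) : Prop :=
  ∀ π, IsPos E v₀ π → (f π).length ≤ b

/-- A positional strategy assigns to each vertex the nonempty block appended. -/
def IsPositional (E : V → V → Prop) (f : V → List V) : Prop :=
  ∀ v, f v ≠ [] ∧ (v :: f v).Chain' E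

/-- Consistency with a positional strategy: after each prefix chosen by player 1,
player 0 plays `f` of the current (last) vertex. -/
def ConsPositional (f : V → List V) (ρ : ℕ → V) : Prop :=
  ∃ c : ℕ → ℕ, 1 ≤ c 0 ∧ ∀ i,
    pref ρ (c i + (f (ρ (c i - 1))).length) = pref ρ (c i) ++ f (ρ (c i - 1)) ∧
    c i + (f (ρ (c i - 1))).length < c (i + 1)

def PositionalWinning (E : V → V → Prop) (v₀ : V) (W : Set (ℕ → V)) (f : V → List V) : Prop :=
  IsPositional E f ∧ ∀ ρ, IsPlay E v₀ ρ → ConsPositional f ρ → ρ ∈ W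

/-- Structural requirement shared by move-counting and length-counting strategies:
for `n ≥ 1`, `h v n` is a nonempty block forming a path from `v`. -/
def IsCountingStrategy (E : V → V → Prop) (h : V → ℕ → List V) : Prop :=
  ∀ v n, 1 ≤ n → h v n ≠ [] ∧ (v :: h v n).Chain' E

/-- Consistency with a move-counting strategy: at its `i`-th move (`i ≥ 1`) player 0 plays
`h (current vertex) i`. -/
def ConsMoveCounting (h : V → ℕ → List V) (ρ : ℕ → V) : Prop :=
  ∃ c : ℕ → ℕ, 1 ≤ c 0 ∧ ∀ i,
    pref ρ (c i + (h (ρ (c i - 1)) (i + 1)).length) = pref ρ (c i) ++ h (ρ (c i - 1)) (i + 1) ∧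
    c i + (h (ρ (c i - 1)) (i + 1)).length < c (i + 1)

def MoveCountingWinning (E : V → V → Prop) (v₀ : V) (W : Set (ℕ → V))
    (h : V → ℕ → List V) : Prop :=
  IsCountingStrategy E h ∧ ∀ ρ, IsPlay E v₀ ρ → ConsMoveCounting h ρ → ρ ∈ W

/-- Consistency with a length-counting strategy: after a prefix of length `c i`
player 0 plays `h (current vertex) (c i)`. -/
def ConsLengthCounting (h : V → ℕ → List V) (ρ : ℕ → V) : Prop :=
  ∃ c : ℕ → ℕ, 1 ≤ c 0 ∧ ∀ i,
    pref ρ (c i + (h (ρ (c i - 1)) (c i)).length) = pref ρ (c i) ++ h (ρ (c i - 1)) (c i) ∧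
    c i + (h (ρ (c i - 1)) (c i)).length < c (i + 1)

def LengthCountingWinning (E : V → V → Prop) (v₀ : V) (W : Set (ℕ → V))
    (h : V → ℕ → List V) : Prop :=
  IsCountingStrategy E h ∧ ∀ ρ, IsPlay E v₀ ρ → ConsLengthCounting h ρ → ρ ∈ W

/-- The segment `ρ a, ρ (a+1), …, ρ (b-1)` of an infinite sequence. -/
def seg (ρ : ℕ → V) (a b : ℕ) : List V := (List.range (b - a)).map fun j => ρ (a + j)

/-- A last-move strategy is defined on all nonempty finite paths of the graph. -/
def IsLastMove (E : V → V → Prop) (g : List V → List V) : Prop :=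
  ∀ π, π ≠ [] → π.Chain' E → g π ≠ [] ∧ (π ++ g π).Chain' E

/-- Consistency with the last-move strategy `g`: the play decomposes as
`π₁ g(π₁) π₂ g(π₂) ⋯` where the `πᵢ` are the (nonempty) moves of player 1. -/
def ConsLastMove (g : List V → List V) (ρ : ℕ → V) : Prop :=
  ∃ s e : ℕ → ℕ, s 0 = 0 ∧ (∀ i, s i < e i) ∧ ∀ i,
    seg ρ (e i) (e i + (g (seg ρ (s i) (e i))).length) = g (seg ρ (s i) (e i)) ∧
    s (i + 1) = e i + (g (seg ρ (s i) (e i))).length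

def LastMoveWinning (E : V → V → Prop) (v₀ : V) (W : Set (ℕ → V)) (g : List V → List V) : Prop :=
  IsLastMove E g ∧ ∀ ρ, IsPlay E v₀ ρ → ConsLastMove g ρ → ρ ∈ W

/-- The cylinder generated by the finite word `π`. -/
def Cyl (π : List V) : Set (ℕ → V) := {ρ | pref ρ π.length = π}

/-- One-step transition probabilities obtained from the weights `w`. -/
noncomputable def transP [Fintype V] (E : V → V → Prop) (w : V → V → ℝ≥0) (u v : V) : ℝ≥0∞ := by
  classical
  exact if E u v then
    (w u v : ℝ≥0∞) / ∑ x ∈ Finset.univ.filter (fun x => E u x), (w u x : ℝ≥0∞)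
  else 0

/-- The probability of the cylinder generated by a finite word: the product of the
one-step transition probabilities along it. -/
noncomputable def pathP [Fintype V] (E : V → V → Prop) (w : V → V → ℝ≥0) (π : List V) : ℝ≥0∞ :=
  ((π.zip π.tail).map fun q => transP E w q.1 q.2).prod

/-- `P` is the reasonable probability measure associated with the weights `w`. -/
def IsReasonable [Fintype V] [MeasurableSpace (ℕ → V)] (E : V → V → Prop) (v₀ : V)
    (w : V → V → ℝ≥0) (P : Measure (ℕ → V)) : Prop :=
  IsProbabilityMeasure P ∧ ∀ π : List V, π.head? = some v₀ → P (Cyl π) = pathP E w π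

/-- `Ps` is a legal move of player 0 in the generalised game `G_α` at position `π`: a
finite nonempty set of nonempty finite paths from the last vertex of `π` whose union of
cylinders has conditional probability at least `α` given `Cyl π`. -/
def LegalProposal [MeasurableSpace (ℕ → V)] (E : V → V → Prop) (P : Measure (ℕ → V)) (α : ℝ)
    (π : List V) (Ps : Finset (List V)) : Prop :=
  Ps.Nonempty ∧ (∀ τ ∈ Ps, τ ≠ [] ∧ (π ++ τ).Chain' E) ∧
    ENNReal.ofReal α ≤ P (⋃ τ ∈ Ps, Cyl (π ++ τ)) / P (Cyl π)

/-- An α-strategy for player 0. -/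
def IsAlphaStrategy [MeasurableSpace (ℕ → V)] (E : V → V → Prop) (v₀ : V) (P : Measure (ℕ → V))
    (α : ℝ) (f : List V → Finset (List V)) : Prop :=
  ∀ π, IsPos E v₀ π → LegalProposal E P α π (f π)

/-- Consistency with an α-strategy: at each stage, player 1 picks some element of the
set proposed by player 0 and appends a nonempty block after it. -/
def ConsAlpha (f : List V → Finset (List V)) (ρ : ℕ → V) : Prop :=
  ∃ c : ℕ → ℕ, 1 ≤ c 0 ∧ ∀ i, ∃ τ ∈ f (pref ρ (c i)),
    pref ρ (c i + τ.length) = pref ρ (c i) ++ τ ∧ c i + τ.length < c (i + 1)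

def AlphaWinning [MeasurableSpace (ℕ → V)] (E : V → V → Prop) (v₀ : V) (P : Measure (ℕ → V))
    (α : ℝ) (W : Set (ℕ → V)) (f : List V → Finset (List V)) : Prop :=
  IsAlphaStrategy E v₀ P α f ∧ ∀ ρ, IsPlay E v₀ ρ → ConsAlpha f ρ → ρ ∈ W

/-- A strategy for player 1 in the generalised game `G_α` consists of an initial path and,
for each position together with a legal proposal of player 0, the selected element of the
proposal and the next (nonempty) block played by player 1. -/
def IsP1Strategy [MeasurableSpace (ℕ → V)] (E : V → V → Prop) (v₀ : V) (P : Measure (ℕ → V))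
    (α : ℝ) (init : List V) (g : List V → Finset (List V) → List V × List V) : Prop :=
  IsPos E v₀ init ∧
    ∀ π Ps, IsPos E v₀ π → LegalProposal E P α π Ps →
      (g π Ps).1 ∈ Ps ∧ (g π Ps).2 ≠ [] ∧ (π ++ ((g π Ps).1 ++ (g π Ps).2)).Chain' E

/-- Consistency of a play with player 1's strategy `(init, g)`:
there is a sequence of legal proposals of player 0 generating the play. -/
def ConsP1 [MeasurableSpace (ℕ → V)] (E : V → V → Prop) (P : Measure (ℕ → V)) (α : ℝ)
    (init : List V) (g : List V → Finset (List V) → List V × List V) (ρ : ℕ → V) : Prop :=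
  ∃ (Ps : ℕ → Finset (List V)) (p : ℕ → List V), p 0 = init ∧
    (∀ n, pref ρ (p n).length = p n) ∧
    ∀ n, LegalProposal E P α (p n) (Ps n) ∧
      p (n + 1) = p n ++ ((g (p n) (Ps n)).1 ++ (g (p n) (Ps n)).2)

def P1Winning [MeasurableSpace (ℕ → V)] (E : V → V → Prop) (v₀ : V) (P : Measure (ℕ → V))
    (α : ℝ) (W : Set (ℕ → V)) (init : List V)
    (g : List V → Finset (List V) → List V × List V) : Prop :=
  IsP1Strategy E v₀ P α init g ∧ ∀ ρ, IsPlay E v₀ ρ → ConsP1 E P α init g ρ → ρ ∉ W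

/-- A union of cylinders, i.e. an open subset of the space of sequences. -/
def IsCylOpen (U : Set (ℕ → V)) : Prop :=
  ∃ S : Set (List V), U = ⋃ π ∈ S, Cyl π

/-- `W` is a countable intersection of open subsets of the space `Paths (G, v₀)`. -/
def IsCountableInterOfOpens (E : V → V → Prop) (v₀ : V) (W : Set (ℕ → V)) : Prop :=
  ∃ U : ℕ → Set (ℕ → V), (∀ n, IsCylOpen (U n)) ∧
    W = {ρ | IsPlay E v₀ ρ} ∩ ⋂ n, U n

/-- For every `n`, the concatenation of the blocks `u 0, …, u (n-1)` is a prefix of `ρ`. -/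
def AgreesWithBlocks (ρ : ℕ → V) (u : ℕ → List V) : Prop :=
  ∀ n, pref ρ (((List.range n).map u).flatten).length = ((List.range n).map u).flatten

/-!
If Player 0 wins with an `α`-strategy `f`, `α > 0`, inspect `f` along a play at the
checkpoints `1 = n₀ < n₁ < ⋯`, where `nₖ₊₁` exceeds `nₖ` by more than the longest block `f`
proposes at the prefix of length `nₖ`. A play realising infinitely many of these proposals is
consistent with `f`. Whatever happened before, the proposal at a checkpoint is realised with
conditional probability at least `α`, so missing the next `j` of them has probability at most
`(1 - α) ^ j`; hence almost every play realises infinitely many proposals and lies in `W`.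

Conversely, let `W = Plays ∩ ⋂ₙ Uₙ` have full measure. At a position `π` the open set
`Cyl π ∩ ⋂_{n ≤ |π|} Uₙ` has the positive measure of `Cyl π`. It is a countable union of
cylinders, so by continuity from below finitely many of them carry a fraction `α < 1` of that
measure; proposing them at `π` forces every consistent play into every `Uₙ`.
-/

@[simp] lemma length_pref (ρ : ℕ → V) (n : ℕ) : (pref ρ n).length = n := by
  simp [pref]

lemma take_pref (ρ : ℕ → V) {m n : ℕ} (h : m ≤ n) : (pref ρ n).take m = pref ρ m := by
  simp [pref, ← List.map_take, List.take_range, Nat.min_eq_left h]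

lemma pref_prefix_pref (ρ : ℕ → V) {m n : ℕ} (h : m ≤ n) : pref ρ m <+: pref ρ n :=
  take_pref ρ h ▸ List.take_prefix m _

lemma mem_cyl_pref (ρ : ℕ → V) (n : ℕ) : ρ ∈ Cyl (pref ρ n) := by
  simp [Cyl]

lemma cyl_subset_of_prefix {π σ : List V} (h : π <+: σ) : Cyl σ ⊆ Cyl π := by
  intro ρ hρ
  simp only [Cyl, Set.mem_ofPred_eq] at hρ ⊢
  rw [List.prefix_iff_eq_take.1 h, ← hρ, take_pref ρ (by simpa using h.length_le)]
  simp

lemma cyl_pref_subset_of_mem {σ : List V} {ρ : ℕ → V} (hρ : ρ ∈ Cyl σ) {n : ℕ}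
    (hn : σ.length ≤ n) : Cyl (pref ρ n) ⊆ Cyl σ :=
  cyl_subset_of_prefix (hρ ▸ pref_prefix_pref ρ hn)

lemma disjoint_cyl_pref_of_notMem {σ : List V} {ρ : ℕ → V} (hρ : ρ ∉ Cyl σ) {n : ℕ}
    (hn : σ.length ≤ n) : Disjoint (Cyl (pref ρ n)) (Cyl σ) := by
  refine Set.disjoint_left.2 fun ρ' hρ' hρ'σ => hρ ?_
  have hpref : pref ρ' n = pref ρ n := by simpa [Cyl] using hρ'
  exact cyl_pref_subset_of_mem hρ'σ hn (by rw [hpref]; exact mem_cyl_pref ρ n)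

lemma disjoint_cyl_of_length_eq {π σ : List V} (hl : π.length = σ.length) (hne : π ≠ σ) :
    Disjoint (Cyl π) (Cyl σ) :=
  Set.disjoint_left.2 fun ρ (hπ : _ = _) (hσ : _ = _) => hne (by rw [← hπ, hl, hσ])

lemma measurableSet_cyl [MeasurableSpace V] [DiscreteMeasurableSpace V] (π : List V) :
    MeasurableSet (Cyl π) := by
  have : Cyl π = ⋂ i : Fin π.length, (fun ρ : ℕ → V => ρ i) ⁻¹' {π[i]} := by
    ext ρ
    simp [Cyl, pref, List.ext_getElem_iff, Fin.forall_iff]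
  rw [this]
  exact .iInter fun i => measurable_pi_apply _ (.singleton _)

lemma IsCylOpen.eventually_cyl_pref_subset {U : Set (ℕ → V)} (hU : IsCylOpen U) {ρ : ℕ → V}
    (hρ : ρ ∈ U) : ∀ᶠ n in Filter.atTop, Cyl (pref ρ n) ⊆ U := by
  obtain ⟨S, rfl⟩ := hU
  obtain ⟨σ, hσ, hρσ⟩ := Set.mem_iUnion₂.1 hρ
  exact Filter.eventually_atTop.2 ⟨σ.length, fun n hn =>
    (cyl_pref_subset_of_mem hρσ hn).trans (Set.subset_biUnion_of_mem hσ)⟩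

lemma isPlay_iff_forall_isPos_pref {E : V → V → Prop} {v₀ : V} {ρ : ℕ → V} :
    IsPlay E v₀ ρ ↔ ∀ n, IsPos E v₀ (pref ρ (n + 1)) := by
  simp only [IsPlay, IsPos, List.Chain', List.isChain_iff_getElem]
  simp only [pref, List.head?_map, List.head?_range, Nat.add_eq_zero_iff, one_ne_zero, and_false,
    ↓reduceIte, Option.map_some, Option.some.injEq, List.length_map, List.length_range,
    Order.lt_add_one_iff, Order.add_one_le_iff, List.getElem_map, List.getElem_range]
  exact ⟨fun ⟨h0, h⟩ _ => ⟨h0, fun i _ => h i⟩,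
    fun h => ⟨(h 0).1, fun n => (h (n + 1)).2 n n.lt_add_one⟩⟩

lemma isPos_pref {E : V → V → Prop} {v₀ : V} {ρ : ℕ → V} (hρ : IsPlay E v₀ ρ) {n : ℕ}
    (hn : 1 ≤ n) : IsPos E v₀ (pref ρ n) := by
  obtain ⟨k, rfl⟩ := Nat.exists_eq_add_of_le' hn
  exact isPlay_iff_forall_isPos_pref.1 hρ k

section Reasonable

variable [Fintype V] {E : V → V → Prop} {v₀ : V} {w : V → V → ℝ≥0}

lemma transP_eq_zero {u v : V} (h : ¬ E u v) : transP E w u v = 0 := by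
  simp [transP, h]

lemma transP_ne_zero (hw : ∀ u v, E u v → 0 < w u v) {u v : V} (h : E u v) :
    transP E w u v ≠ 0 := by
  classical
  rw [transP, if_pos h]
  exact ENNReal.div_ne_zero.2 ⟨by simpa using (hw u v h).ne',
    ENNReal.sum_ne_top.2 fun _ _ => ENNReal.coe_ne_top⟩

lemma pathP_cons_cons (a b : V) (l : List V) :
    pathP E w (a :: b :: l) = transP E w a b * pathP E w (b :: l) := by
  simp [pathP]

lemma pathP_eq_zero {π : List V} (h : ¬ π.IsChain E) : pathP E w π = 0 := by
  induction π with
  | nil => exact absurd .nil h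
  | cons a l ih =>
    cases l with
    | nil => exact absurd (.singleton a) h
    | cons b l =>
      rw [List.isChain_cons_cons, not_and_or] at h
      rw [pathP_cons_cons]
      rcases h with hab | hl
      · rw [transP_eq_zero hab, zero_mul]
      · rw [ih hl, mul_zero]

lemma pathP_ne_zero (hw : ∀ u v, E u v → 0 < w u v) {π : List V} (h : π.IsChain E) :
    pathP E w π ≠ 0 := by
  induction π with
  | nil => simp [pathP]
  | cons a l ih =>
    cases l with
    | nil => simp [pathP]
    | cons b l =>
      rw [List.isChain_cons_cons] at h
      rw [pathP_cons_cons]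
      exact mul_ne_zero (transP_ne_zero hw h.1) (ih h.2)

variable [MeasurableSpace V] {P : Measure (ℕ → V)}

lemma IsReasonable.measure_cyl_ne_zero (hP : IsReasonable E v₀ w P)
    (hw : ∀ u v, E u v → 0 < w u v) {π : List V} (hπ : IsPos E v₀ π) : P (Cyl π) ≠ 0 := by
  rw [hP.2 π hπ.1]
  exact pathP_ne_zero hw hπ.2

variable [DiscreteMeasurableSpace V]

lemma IsReasonable.measure_cyl_eq_zero (hP : IsReasonable E v₀ w P) {π : List V}
    (hne : π ≠ []) (hπ : ¬ IsPos E v₀ π) : P (Cyl π) = 0 := by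
  by_cases hhead : π.head? = some v₀
  · rw [hP.2 π hhead]
    exact pathP_eq_zero fun hc => hπ ⟨hhead, hc⟩
  · have := hP.1
    have hv₀ : P (Cyl [v₀])ᶜ = 0 := by
      rw [prob_compl_eq_zero_iff (measurableSet_cyl _), hP.2 [v₀] rfl]
      simp [pathP]
    refine measure_mono_null (fun ρ (hρ : ρ ∈ Cyl π) (hρv₀ : ρ ∈ Cyl [v₀]) => hhead ?_) hv₀
    obtain ⟨v, l, rfl⟩ := List.exists_cons_of_ne_nil hne
    have hv : ρ ∈ Cyl [v] := cyl_subset_of_prefix (by simp) hρ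
    simp_all [Cyl, pref]

lemma IsReasonable.ae_isPlay (hP : IsReasonable E v₀ w P) : ∀ᵐ ρ ∂P, IsPlay E v₀ ρ := by
  have hsub : {ρ | ¬ IsPlay E v₀ ρ} ⊆ ⋃ π ∈ {π : List V | π ≠ [] ∧ ¬ IsPos E v₀ π}, Cyl π := by
    intro ρ hρ
    obtain ⟨n, hn⟩ := not_forall.1 (mt isPlay_iff_forall_isPos_pref.2 hρ)
    exact Set.mem_biUnion ⟨fun h => by simpa using congrArg List.length h, hn⟩ (mem_cyl_pref ρ _)
  refine ae_iff.2 <| measure_mono_null hsub ((measure_biUnion_null_iff (Set.to_countable _)).2 ?_)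
  exact fun π hπ => hP.measure_cyl_eq_zero hπ.1 hπ.2

end Reasonable

lemma LegalProposal.measure_diff_le [MeasurableSpace V] [DiscreteMeasurableSpace V]
    {E : V → V → Prop} {P : Measure (ℕ → V)} [IsFiniteMeasure P] {α : ℝ} {π : List V}
    {Ps : Finset (List V)} (h : LegalProposal E P α π Ps) :
    P (Cyl π \ ⋃ τ ∈ Ps, Cyl (π ++ τ)) ≤ (1 - ENNReal.ofReal α) * P (Cyl π) := by
  have hsub : ⋃ τ ∈ Ps, Cyl (π ++ τ) ⊆ Cyl π :=
    Set.iUnion₂_subset fun τ _ => cyl_subset_of_prefix (List.prefix_append π τ)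
  have hmeas : MeasurableSet (⋃ τ ∈ Ps, Cyl (π ++ τ)) :=
    Ps.measurableSet_biUnion fun τ _ => measurableSet_cyl _
  have hlow : ENNReal.ofReal α * P (Cyl π) ≤ P (⋃ τ ∈ Ps, Cyl (π ++ τ)) := by
    by_cases h0 : P (Cyl π) = 0
    · simp [h0]
    · exact (ENNReal.le_div_iff_mul_le (.inl h0) (.inl (measure_ne_top P _))).1 h.2.2
  rw [measure_sdiff hsub hmeas.nullMeasurableSet (measure_ne_top P _),
    ENNReal.sub_mul fun _ _ => measure_ne_top P _, one_mul]
  exact tsub_le_tsub_left hlow _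

section Checkpoints

variable (f : List V → Finset (List V))

def proposalLength (π : List V) : ℕ := (f π).sup List.length

/-- Long enough that whether a play realises the proposal at `π` is decided by its prefix of
this length. -/
def nextCheckpoint (π : List V) : ℕ := π.length + proposalLength f π + 1

def proposalCyl (π : List V) : Set (ℕ → V) := ⋃ τ ∈ f π, Cyl (π ++ τ)

def failingExtensions (π : List V) : Set (List V) :=
  {π' | π <+: π' ∧ π'.length = nextCheckpoint f π ∧ Disjoint (Cyl π') (proposalCyl f π)}

/-- The plays through `π` that miss the proposals at the next `j` checkpoints counted from `π`. -/
def failSet : ℕ → List V → Set (ℕ → V)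
  | 0, π => Cyl π
  | j + 1, π => ⋃ π' ∈ failingExtensions f π, failSet j π'

lemma failSet_subset_cyl : ∀ j π, failSet f j π ⊆ Cyl π
  | 0, _ => subset_rfl
  | j + 1, _ => Set.iUnion₂_subset fun _ hπ' =>
      (failSet_subset_cyl j _).trans (cyl_subset_of_prefix hπ'.1)

lemma biUnion_failingExtensions_subset (π : List V) :
    ⋃ π' ∈ failingExtensions f π, Cyl π' ⊆ Cyl π \ proposalCyl f π :=
  Set.iUnion₂_subset fun _ hπ' =>
    Set.subset_sdiff.2 ⟨cyl_subset_of_prefix hπ'.1, hπ'.2.2⟩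

def checkpoint (ρ : ℕ → V) : ℕ → ℕ
  | 0 => 1
  | k + 1 => nextCheckpoint f (pref ρ (checkpoint ρ k))

variable {f}

lemma lt_checkpoint_succ {ρ : ℕ → V} {k : ℕ} {τ : List V}
    (hτ : τ ∈ f (pref ρ (checkpoint f ρ k))) :
    checkpoint f ρ k + τ.length < checkpoint f ρ (k + 1) := by
  have := Finset.le_sup (f := List.length) hτ
  simp only [checkpoint, nextCheckpoint, proposalLength, length_pref] at this ⊢
  omega

lemma strictMono_checkpoint (ρ : ℕ → V) : StrictMono (checkpoint f ρ) :=
  strictMono_nat_of_lt_succ fun k => by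
    simp only [checkpoint, nextCheckpoint, length_pref]
    omega

lemma one_le_checkpoint (ρ : ℕ → V) (k : ℕ) : 1 ≤ checkpoint f ρ k :=
  (strictMono_checkpoint ρ).monotone k.zero_le

lemma mem_failSet_of_forall_notMem {ρ : ℕ → V} :
    ∀ (j m : ℕ), (∀ k ≥ m, ρ ∉ proposalCyl f (pref ρ (checkpoint f ρ k))) →
      ρ ∈ failSet f j (pref ρ (checkpoint f ρ m))
  | 0, m, _ => mem_cyl_pref ρ _
  | j + 1, m, h => by
    refine Set.mem_biUnion ⟨pref_prefix_pref ρ (strictMono_checkpoint ρ m.lt_add_one).le,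
      length_pref ρ _, ?_⟩ (mem_failSet_of_forall_notMem j (m + 1) fun k hk => h k (by omega))
    refine Set.disjoint_iUnion₂_right.2 fun τ hτ => disjoint_cyl_pref_of_notMem ?_ ?_
    · exact fun hρ => h m le_rfl (Set.mem_biUnion hτ hρ)
    · simpa using (lt_checkpoint_succ hτ).le

lemma consAlpha_of_frequently {ρ : ℕ → V}
    (h : ∃ᶠ k in Filter.atTop, ρ ∈ proposalCyl f (pref ρ (checkpoint f ρ k))) :
    ConsAlpha f ρ := by
  obtain ⟨φ, hφ, hmem⟩ := Filter.extraction_of_frequently_atTop h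
  refine ⟨fun i => checkpoint f ρ (φ i), one_le_checkpoint ρ _, fun i => ?_⟩
  obtain ⟨τ, hτ, hρτ⟩ := Set.mem_iUnion₂.1 (hmem i)
  refine ⟨τ, hτ, by simpa [Cyl] using hρτ, (lt_checkpoint_succ hτ).trans_le ?_⟩
  exact (strictMono_checkpoint ρ).monotone (hφ i.lt_add_one)

end Checkpoints

section AlphaWinningNull

variable [Fintype V] [MeasurableSpace V] [DiscreteMeasurableSpace V] {E : V → V → Prop} {v₀ : V}
  {w : V → V → ℝ≥0} {P : Measure (ℕ → V)} {α : ℝ} {f : List V → Finset (List V)}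

lemma measure_failSet_le (hP : IsReasonable E v₀ w P) (hf : IsAlphaStrategy E v₀ P α f) :
    ∀ (j : ℕ) {π : List V}, π ≠ [] →
      P (failSet f j π) ≤ (1 - ENNReal.ofReal α) ^ j * P (Cyl π)
  | 0, π, _ => by simp [failSet]
  | j + 1, π, hπ => by
    have := hP.1
    by_cases hpos : IsPos E v₀ π
    swap
    · simp [measure_mono_null (failSet_subset_cyl f _ π) (hP.measure_cyl_eq_zero hπ hpos)]
    set β := 1 - ENNReal.ofReal α
    calc P (failSet f (j + 1) π)
        ≤ ∑' π' : failingExtensions f π, P (failSet f j π') :=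
          measure_biUnion_le P (Set.to_countable _) _
      _ ≤ ∑' π' : failingExtensions f π, β ^ j * P (Cyl π') :=
          ENNReal.tsum_le_tsum fun π' =>
            measure_failSet_le hP hf j (List.ne_nil_of_length_pos (by
              rw [π'.2.2.1, nextCheckpoint]; omega))
      _ = β ^ j * P (⋃ π' ∈ failingExtensions f π, Cyl π') := by
          rw [ENNReal.tsum_mul_left, measure_biUnion (Set.to_countable _)
            (fun a ha b hb hab => disjoint_cyl_of_length_eq (ha.2.1.trans hb.2.1.symm) hab)
            fun π' _ => measurableSet_cyl π']
      _ ≤ β ^ j * P (Cyl π \ proposalCyl f π) := by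
          gcongr
          exact biUnion_failingExtensions_subset f π
      _ ≤ β ^ j * (β * P (Cyl π)) := by
          gcongr
          exact (hf π hpos).measure_diff_le
      _ = β ^ (j + 1) * P (Cyl π) := by ring

lemma measure_iInter_failSet (hP : IsReasonable E v₀ w P) (hf : IsAlphaStrategy E v₀ P α f)
    (hα : 0 < α) {π : List V} (hπ : π ≠ []) : P (⋂ j, failSet f j π) = 0 := by
  have := hP.1
  have hβ : 1 - ENNReal.ofReal α < 1 :=
    ENNReal.sub_lt_self ENNReal.one_ne_top one_ne_zero (ENNReal.ofReal_pos.2 hα).ne'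
  have hlim : Filter.Tendsto (fun j => (1 - ENNReal.ofReal α) ^ j * P (Cyl π))
      Filter.atTop (nhds 0) := by
    simpa using ENNReal.Tendsto.mul_const (ENNReal.tendsto_pow_atTop_nhds_zero_of_lt_one hβ)
      (.inr (measure_ne_top P (Cyl π)))
  refine nonpos_iff_eq_zero.1 (ge_of_tendsto' hlim fun j => ?_)
  exact (measure_mono (Set.iInter_subset _ j)).trans (measure_failSet_le hP hf j hπ)

lemma measure_compl_eq_zero_of_alphaWinning (hP : IsReasonable E v₀ w P) (hα : 0 < α)
    {W : Set (ℕ → V)} (hf : AlphaWinning E v₀ P α W f) : P Wᶜ = 0 := by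
  have hfail : ∀ᵐ ρ ∂P, ∀ π : List V, π ≠ [] → ρ ∉ ⋂ j, failSet f j π :=
    ae_all_iff.2 fun π => by
      by_cases hπ : π = []
      · simp [hπ]
      · filter_upwards [measure_eq_zero_iff_ae_notMem.1 (measure_iInter_failSet hP hf.1 hα hπ)]
          with ρ hρ using fun _ => hρ
  refine measure_eq_zero_iff_ae_notMem.2 ?_
  filter_upwards [hP.ae_isPlay, hfail] with ρ hplay hρ
  refine not_not.2 (hf.2 ρ hplay (consAlpha_of_frequently ?_))
  intro hev
  obtain ⟨m, hm⟩ := Filter.eventually_atTop.1 hev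
  refine hρ _ (List.ne_nil_of_length_pos ?_) (Set.mem_iInter.2 fun j =>
    mem_failSet_of_forall_notMem j m hm)
  rw [length_pref]
  exact one_le_checkpoint ρ m

end AlphaWinningNull

lemma _root_.MeasureTheory.exists_finset_subset_lt_measure_biUnion {Ω ι : Type*}
    [MeasurableSpace Ω] (μ : Measure Ω) {S : Set ι} (hS : S.Countable) (s : ι → Set Ω)
    {a : ℝ≥0∞} (h : a < μ (⋃ i ∈ S, s i)) : ∃ F : Finset ι, ↑F ⊆ S ∧ a < μ (⋃ i ∈ F, s i) := by
  have := hS.to_subtype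
  have hmono : Monotone fun F : Finset S => ⋃ i ∈ F, s i :=
    fun _ _ hFG => Set.biUnion_subset_biUnion_left hFG
  rw [Set.biUnion_eq_iUnion, Set.iUnion_eq_iUnion_finset, hmono.measure_iUnion] at h
  obtain ⟨F, hF⟩ := lt_iSup_iff.1 h
  refine ⟨F.map (Function.Embedding.subtype _), by simp +contextual [Set.subset_def], ?_⟩
  simpa using hF

section AlphaWinningExists

variable [Fintype V] [MeasurableSpace V] [DiscreteMeasurableSpace V] {E : V → V → Prop} {v₀ : V}
  {w : V → V → ℝ≥0} {P : Measure (ℕ → V)} {α : ℝ}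

lemma IsReasonable.ae_mem_biUnion_cyl_extension (hP : IsReasonable E v₀ w P) {π : List V}
    {K : Set (ℕ → V)} (hK : ∀ ρ ∈ K, ∀ᶠ n in Filter.atTop, Cyl (pref ρ n) ⊆ K)
    (hKπ : K ⊆ Cyl π) :
    ∀ᵐ ρ ∂P, ρ ∈ K →
      ρ ∈ ⋃ τ ∈ {τ | τ ≠ [] ∧ IsPos E v₀ (π ++ τ) ∧ Cyl (π ++ τ) ⊆ K}, Cyl (π ++ τ) := by
  filter_upwards [hP.ae_isPlay] with ρ hplay hρ
  obtain ⟨N, hN, hNK⟩ := ((Filter.eventually_gt_atTop π.length).and (hK ρ hρ)).exists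
  have hsplit : π ++ (pref ρ N).drop π.length = pref ρ N := by
    conv_rhs => rw [← List.take_append_drop π.length (pref ρ N)]
    rw [take_pref ρ hN.le, hKπ hρ]
  refine Set.mem_biUnion (x := (pref ρ N).drop π.length) ⟨?_, ?_, ?_⟩ ?_
  · exact List.ne_nil_of_length_pos (by simpa using hN)
  all_goals rw [hsplit]
  · exact isPos_pref hplay (by omega)
  · exact hNK
  · exact mem_cyl_pref ρ N

lemma IsReasonable.exists_legalProposal (hP : IsReasonable E v₀ w P)
    (hw : ∀ u v, E u v → 0 < w u v) {U : ℕ → Set (ℕ → V)} (hU : ∀ n, IsCylOpen (U n))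
    (hUnull : ∀ n, P (U n)ᶜ = 0) (hα : α < 1) {π : List V} (hπ : IsPos E v₀ π) :
    ∃ Ps : Finset (List V), LegalProposal E P α π Ps ∧
      ∀ τ ∈ Ps, ∀ n ≤ π.length, Cyl (π ++ τ) ⊆ U n := by
  have := hP.1
  set K := Cyl π ∩ ⋂ n ∈ Set.Iic π.length, U n
  have hK : ∀ ρ ∈ K, ∀ᶠ n in Filter.atTop, Cyl (pref ρ n) ⊆ K := fun ρ hρ => by
    have hπ' : ∀ᶠ n in Filter.atTop, Cyl (pref ρ n) ⊆ Cyl π :=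
      Filter.eventually_atTop.2 ⟨π.length, fun n hn => cyl_pref_subset_of_mem hρ.1 hn⟩
    have hU' : ∀ᶠ n in Filter.atTop, ∀ m ∈ Set.Iic π.length, Cyl (pref ρ n) ⊆ U m :=
      (Filter.eventually_all_finite (Set.finite_Iic _)).2 fun m hm =>
        (hU m).eventually_cyl_pref_subset (Set.mem_iInter₂.1 hρ.2 m hm)
    filter_upwards [hπ', hU'] with n h1 h2 using Set.subset_inter h1 (Set.subset_iInter₂ h2)
  have hPK : P K = P (Cyl π) := measure_inter_conull <| by
    simpa [Set.compl_iInter] using fun n _ => hUnull n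
  have hPπ := hP.measure_cyl_ne_zero hw hπ
  have hlt : ENNReal.ofReal α * P (Cyl π) <
      P (⋃ τ ∈ {τ | τ ≠ [] ∧ IsPos E v₀ (π ++ τ) ∧ Cyl (π ++ τ) ⊆ K}, Cyl (π ++ τ)) :=
    calc ENNReal.ofReal α * P (Cyl π) < 1 * P (Cyl π) :=
          (ENNReal.mul_lt_mul_iff_left hPπ (measure_ne_top P _)).2 (ENNReal.ofReal_lt_one.2 hα)
      _ = P K := by rw [one_mul, hPK]
      _ ≤ _ := measure_mono_ae (hP.ae_mem_biUnion_cyl_extension hK Set.inter_subset_left)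
  obtain ⟨F, hFS, hF⟩ :=
    exists_finset_subset_lt_measure_biUnion P (Set.to_countable _) _ hlt
  refine ⟨F, ⟨?_, fun τ hτ => ⟨(hFS hτ).1, (hFS hτ).2.1.2⟩, ?_⟩, fun τ hτ n hn => ?_⟩
  · exact Finset.nonempty_iff_ne_empty.2 fun h => by simp [h] at hF
  · exact (ENNReal.le_div_iff_mul_le (.inl hPπ) (.inl (measure_ne_top P _))).2 hF.le
  · exact (hFS hτ).2.2.trans (Set.inter_subset_right.trans (Set.biInter_subset_of_mem hn))

lemma IsReasonable.exists_alphaWinning (hP : IsReasonable E v₀ w P)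
    (hw : ∀ u v, E u v → 0 < w u v) {W : Set (ℕ → V)} (hW : IsCountableInterOfOpens E v₀ W)
    (hnull : P Wᶜ = 0) (hα : α < 1) : ∃ f, AlphaWinning E v₀ P α W f := by
  obtain ⟨U, hU, rfl⟩ := hW
  have hUnull : ∀ n, P (U n)ᶜ = 0 := fun n => measure_mono_null
    (Set.compl_subset_compl.2 (Set.inter_subset_right.trans (Set.iInter_subset _ n))) hnull
  choose! f hf using fun π (hπ : IsPos E v₀ π) => hP.exists_legalProposal hw hU hUnull hα hπ
  refine ⟨f, fun π hπ => (hf π hπ).1, fun ρ hρ ⟨c, hc0, hc⟩ => ⟨hρ, Set.mem_iInter.2 fun n => ?_⟩⟩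
  have hc_mono : StrictMono c := strictMono_nat_of_lt_succ fun i => by
    obtain ⟨τ, -, -, h⟩ := hc i
    omega
  have hn : n < c n := by
    have := hc_mono.add_le_nat n 0
    rw [add_zero] at this
    omega
  obtain ⟨τ, hτ, hpref, -⟩ := hc n
  exact (hf _ (isPos_pref hρ (by omega))).2 τ hτ n (by simpa using hn.le)
    (by simpa [Cyl] using hpref)

end AlphaWinningExists

end BMGame

open BMGame

theorem stmt13_general {V : Type*} [Fintype V] [MeasurableSpace V] [DiscreteMeasurableSpace V]
    (E : V → V → Prop) (v₀ : V)
    (W : Set (ℕ → V)) (hGδ : IsCountableInterOfOpens E v₀ W)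
    (w : V → V → ℝ≥0) (hw : ∀ u v, E u v → 0 < w u v)
    (P : MeasureTheory.Measure (ℕ → V)) (hP : IsReasonable E v₀ w P) :
    (P Wᶜ = 0 ↔ ∃ α : ℝ, 0 < α ∧ ∃ f : List V → Finset (List V), AlphaWinning E v₀ P α W f) ∧
    (P Wᶜ = 0 ↔ ∀ α : ℝ, 0 < α → α < 1 →
      ∃ f : List V → Finset (List V), AlphaWinning E v₀ P α W f) := by
  have hwin : P Wᶜ = 0 → ∀ α : ℝ, 0 < α → α < 1 → ∃ f, AlphaWinning E v₀ P α W f :=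
    fun hnull _ _ hα => hP.exists_alphaWinning hw hGδ hnull hα
  have hnull : (∃ α : ℝ, 0 < α ∧ ∃ f, AlphaWinning E v₀ P α W f) → P Wᶜ = 0 :=
    fun ⟨_, hα, _, hf⟩ => measure_compl_eq_zero_of_alphaWinning hP hα hf
  have hhalf : (0 : ℝ) < 1 / 2 ∧ (1 / 2 : ℝ) < 1 := by norm_num
  exact ⟨⟨fun h => ⟨1 / 2, hhalf.1, hwin h _ hhalf.1 hhalf.2⟩, hnull⟩,
    ⟨hwin, fun h => hnull ⟨1 / 2, hhalf.1, h _ hhalf.1 hhalf.2⟩⟩⟩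

/-- For `W` a countable intersection of open subsets of `Paths (G, v₀)` and `P` a
reasonable probability measure, the following are equivalent: `P (W) = 1`; Player 0 has a
winning α-strategy for some `α > 0`; Player 0 has a winning α-strategy for every
`0 < α < 1`. -/
theorem stmt13 {V : Type*} [Fintype V] [MeasurableSpace V] [DiscreteMeasurableSpace V]
    (E : V → V → Prop) (hE : ∀ v, ∃ u, E v u) (v₀ : V)
    (W : Set (ℕ → V)) (hGδ : IsCountableInterOfOpens E v₀ W)
    (w : V → V → ℝ≥0) (hw : ∀ u v, E u v → 0 < w u v)
    (P : MeasureTheory.Measure (ℕ → V)) (hP : IsReasonable E v₀ w P) :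
    (P Wᶜ = 0 ↔ ∃ α : ℝ, 0 < α ∧ ∃ f : List V → Finset (List V), AlphaWinning E v₀ P α W f) ∧
    (P Wᶜ = 0 ↔ ∀ α : ℝ, 0 < α → α < 1 →
      ∃ f : List V → Finset (List V), AlphaWinning E v₀ P α W f) :=
  stmt13_general E v₀ W hGδ w hw P hP
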